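/- arXiv:1412.6048 — 2 statements merged into one kernel-verified Lean document; each statement's English description precedes it below -/
import Mathlib

section
/- Every admissible function f for a cd-monomial M of degree n factors uniquely as a product (pointwise minimum with disjoint supports) of admissible functions of multidegree e_{l_1}, ..., e_{l_m}, where l_1 < ... < l_m are the positions of the 1's in mdeg(M). Explicitly, defining f_j(i) = f(i) for l_j ≤ i ≤ l_{j+1}-1 (with l_{m+1}-1 = n for j = m) and f_j(i) = i otherwise, each f_j is admissible for the monomial with multidegree e_{l_j}, the supports of the f_j are pairwise disjoint, and f = min(f_1,...,f_m). -/
/-- `f : {0,…,n} → ℤ` (modeled on `ℕ`) is admissible for the cd-monomial of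
degree `n` with multidegree `v` (entries indexed `1,…,n`). -/
def Adm (n : ℕ) (v : ℕ → ℕ) (f : ℕ → ℤ) : Prop :=
  f 0 = 0 ∧ f n = (n : ℤ) ∧
  (∀ i, 1 ≤ i → i ≤ n - 1 → 0 ≤ f i ∧ f i ≤ (i : ℤ)) ∧
  (∀ i, 1 ≤ i → i ≤ n → v i = 0 → f (i - 1) < f i) ∧
  (∀ i, 1 ≤ i → i ≤ n → v i = 1 → f i ≤ f (i - 1)) ∧
  (∀ i, 2 ≤ i → i ≤ n → v i = 1 → f (i - 1) - f i ≤ f (i - 2) + 1)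

/-- `v` is the multidegree of a cd-monomial of degree `n`: zero-one valued,
no two adjacent 1's, `v n = 0`, and supported on `{1,…,n}`. -/
def IsMdeg (n : ℕ) (v : ℕ → ℕ) : Prop :=
  (∀ i, v i ≤ 1) ∧ (∀ i, v i = 1 → v (i + 1) = 0) ∧ v n = 0 ∧
  (∀ i, i = 0 ∨ n < i → v i = 0)

/-- The support of an admissible function: `{i ∈ {0,…,n} : f i < i}`. -/
def supp (n : ℕ) (f : ℕ → ℤ) : Set ℕ := {i | i ≤ n ∧ f i < (i : ℤ)}

/-- The `k`-th standard basis multidegree `e_k`. -/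
def ek (k : ℕ) : ℕ → ℕ := fun i => if i = k then 1 else 0

/-- The next descent position after l (or n+1 if there is none). -/
noncomputable def nxt (n : ℕ) (v : ℕ → ℕ) (l : ℕ) : ℕ :=
  sInf {j | l < j ∧ (v j = 1 ∨ j = n + 1)}

/-- The factor of an admissible function f at the descent position l. -/
noncomputable def factorF (n : ℕ) (v : ℕ → ℕ) (f : ℕ → ℤ) (l : ℕ) : ℕ → ℤ :=
  fun i => if l ≤ i ∧ i < nxt n v l then f i else (i : ℤ)

namespace Stmt8Aux

lemma nxt_mem {n l : ℕ} (v : ℕ → ℕ) (hl : l ≤ n) :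
    l < nxt n v l ∧ (v (nxt n v l) = 1 ∨ nxt n v l = n + 1) ∧ nxt n v l ≤ n + 1 := by
  have hmem : (n+1) ∈ {j | l < j ∧ (v j = 1 ∨ j = n + 1)} := ⟨by omega, Or.inr rfl⟩
  have h1 := Nat.sInf_mem (s := {j | l < j ∧ (v j = 1 ∨ j = n + 1)}) ⟨_, hmem⟩
  exact ⟨h1.1, h1.2, Nat.sInf_le hmem⟩

lemma nxt_le_of_one {n l j : ℕ} (v : ℕ → ℕ) (hj : l < j) (h1 : v j = 1) :
    nxt n v l ≤ j := Nat.sInf_le ⟨hj, Or.inl h1⟩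

/-- bounds for admissible functions -/
lemma adm_le {n : ℕ} {v : ℕ → ℕ} {f : ℕ → ℤ} (hf : Adm n v f) :
    ∀ i ≤ n, f i ≤ (i : ℤ) := by
  intro i hi
  rcases Nat.eq_or_lt_of_le hi with h | h
  · subst h; exact le_of_eq hf.2.1
  rcases Nat.eq_zero_or_pos i with h0 | h0
  · subst h0; simp [hf.1]
  · exact (hf.2.2.1 i h0 (by omega)).2

lemma adm_nonneg {n : ℕ} {v : ℕ → ℕ} {f : ℕ → ℤ} (hf : Adm n v f) :
    ∀ i ≤ n, 0 ≤ f i := by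
  intro i hi
  rcases Nat.eq_or_lt_of_le hi with h | h
  · subst h; rw [hf.2.1]; positivity
  rcases Nat.eq_zero_or_pos i with h0 | h0
  · subst h0; simp [hf.1]
  · exact (hf.2.2.1 i h0 (by omega)).1

/-- if no descent up to i, then f i = i -/
lemma adm_id_of_nodesc {n : ℕ} {v : ℕ → ℕ} {f : ℕ → ℤ} (hf : Adm n v f) :
    ∀ i ≤ n, (∀ j, 1 ≤ j → j ≤ i → v j = 0) → f i = (i : ℤ) := by
  intro i
  induction i with
  | zero => intro _ _; simpa using hf.1
  | succ i ih =>
    intro hin hz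
    have h1 : f i = i := ih (by omega) (fun j h1 h2 => hz j h1 (by omega))
    have h2 := hf.2.2.2.1 (i+1) (by omega) hin (hz (i+1) (by omega) le_rfl)
    simp only [Nat.add_sub_cancel] at h2
    have h3 := adm_le hf (i+1) hin
    push_cast at h3 ⊢
    omega

/-- propagation to the right for e_l admissible functions -/
lemma ek_prop {n l : ℕ} {g : ℕ → ℤ} (hg : Adm n (ek l) g) (hl : 1 ≤ l) :
    ∀ i, l ≤ i → i ≤ n → g i = (i : ℤ) → ∀ j, i ≤ j → j ≤ n → g j = (j : ℤ) := by
  intro i hli hin hgi j hij hjn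
  induction j with
  | zero => omega
  | succ j ih =>
    rcases Nat.eq_or_lt_of_le hij with h | h
    · rw [← h]; exact hgi
    have hgj : g j = (j : ℤ) := ih (by omega) (by omega)
    have hz : ek l (j+1) = 0 := by simp only [ek, if_neg (by omega : ¬ j + 1 = l)]
    have h2 := hg.2.2.2.1 (j+1) (by omega) hjn hz
    simp only [Nat.add_sub_cancel] at h2
    have h3 := adm_le hg (j+1) hjn
    push_cast at h3 ⊢
    omega

lemma ek_id_left {n l : ℕ} {g : ℕ → ℤ} (hg : Adm n (ek l) g) :
    ∀ i, i ≤ n → i < l → g i = (i : ℤ) := by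
  intro i hin hil
  exact adm_id_of_nodesc hg i hin (fun j _ hj => by
    simp only [ek, if_neg (by omega : ¬ j = l)])

lemma ek_desc {n l : ℕ} {g : ℕ → ℤ} (hg : Adm n (ek l) g)
    (hl1 : 1 ≤ l) (hln : l ≤ n) : g l < (l : ℤ) := by
  have h1 := hg.2.2.2.2.1 l hl1 hln (by simp [ek])
  have h2 : g (l - 1) = ((l - 1 : ℕ) : ℤ) := ek_id_left hg (l-1) (by omega) (by omega)
  rw [h2] at h1
  have : ((l - 1 : ℕ) : ℤ) < (l : ℤ) := by push_cast; omega
  omega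

end Stmt8Aux

open Stmt8Aux in
/-- Every admissible function factors uniquely as a pointwise minimum of
admissible functions of multidegrees e_l, over the descent positions l. -/
theorem stmt8 (n : ℕ) (v : ℕ → ℕ) (f : ℕ → ℤ)
    (hv : IsMdeg n v) (hf : Adm n v f) :
    (∀ l, v l = 1 → Adm n (ek l) (factorF n v f l)) ∧
    (∀ l l', v l = 1 → v l' = 1 → l ≠ l' →
      Disjoint (supp n (factorF n v f l)) (supp n (factorF n v f l'))) ∧
    (∀ i ≤ n, f i =
      (((Finset.range (n + 1)).filter (fun l => v l = 1)).fold min (i : ℤ)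
        (fun l => factorF n v f l i))) ∧
    (∀ g : ℕ → ℕ → ℤ,
      (∀ l, v l = 1 → Adm n (ek l) (g l)) →
      (∀ l l', v l = 1 → v l' = 1 → l ≠ l' →
        Disjoint (supp n (g l)) (supp n (g l'))) →
      (∀ i ≤ n, f i =
        (((Finset.range (n + 1)).filter (fun l => v l = 1)).fold min (i : ℤ)
          (fun l => g l i))) →
      ∀ l, v l = 1 → ∀ i ≤ n, g l i = factorF n v f l i) := by
  -- basic facts about descent positions
  have hdpos : ∀ l, v l = 1 → 1 ≤ l := by
    intro l hl
    rcases Nat.eq_zero_or_pos l with h | h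
    · rw [h] at hl
      have := hv.2.2.2 0 (Or.inl rfl)
      omega
    · exact h
  have hdlt : ∀ l, v l = 1 → l < n := by
    intro l hl
    have h1 : l ≤ n := by
      by_contra h
      have h2 : n < l := by omega
      have := hv.2.2.2 l (Or.inr h2)
      omega
    have h2 : l ≠ n := by rintro rfl; rw [hv.2.2.1] at hl; omega
    omega
  -- no descent strictly between l and nxt l
  have hbetween : ∀ l j, l < j → j < nxt n v l → v j = 0 := by
    intro l j h1 h2
    have hle := hv.1 j
    have hne : v j ≠ 1 := fun h => absurd (nxt_le_of_one (n := n) v h1 h) (by omega)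
    omega
  -- membership characterization of factorF
  have hF : ∀ l i, factorF n v f l i = if l ≤ i ∧ i < nxt n v l then f i else (i : ℤ) :=
    fun _ _ => rfl
  have hFout : ∀ l i, ¬ (l ≤ i ∧ i < nxt n v l) → factorF n v f l i = (i : ℤ) := by
    intro l i h; rw [hF, if_neg h]
  have hFin : ∀ l i, l ≤ i → i < nxt n v l → factorF n v f l i = f i := by
    intro l i h1 h2; rw [hF, if_pos ⟨h1, h2⟩]
  -- Part 1: each factor is admissible
  have part1 : ∀ l, v l = 1 → Adm n (ek l) (factorF n v f l) := by
    intro l hvl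
    have hl1 := hdpos l hvl
    have hln := hdlt l hvl
    obtain ⟨hnx1, hnx2, hnx3⟩ := nxt_mem (n := n) (l := l) v (by omega)
    refine ⟨?_, ?_, ?_, ?_, ?_, ?_⟩
    · rw [hF]; split
      · exact hf.1
      · simp
    · rw [hF]; split
      · exact hf.2.1
      · rfl
    · intro i h1 h2
      rw [hF]; split
      · exact hf.2.2.1 i h1 h2
      · constructor <;> [positivity; rfl]
    · -- strict increase off the descent
      intro i h1 h2 hz
      have hil : i ≠ l := by intro h; subst h; simp [ek] at hz
      by_cases hi : l ≤ i ∧ i < nxt n v l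
      · by_cases hi' : l ≤ i - 1 ∧ i - 1 < nxt n v l
        · rw [hFin l i hi.1 hi.2, hFin l (i-1) hi'.1 hi'.2]
          exact hf.2.2.2.1 i h1 h2 (hbetween l i (by omega) hi.2)
        · -- i-1 < l ≤ i with i ≠ l : impossible
          exfalso
          have : ¬ (l ≤ i - 1) := fun h => hi' ⟨h, by omega⟩
          omega
      · rw [hFout l i hi]
        by_cases hi' : l ≤ i - 1 ∧ i - 1 < nxt n v l
        · rw [hFin l (i-1) hi'.1 hi'.2]
          have := adm_le hf (i-1) (by omega)
          have : ((i - 1 : ℕ) : ℤ) < (i : ℤ) := by push_cast; omega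
          omega
        · rw [hFout l (i-1) hi']
          push_cast; omega
    · intro i h1 h2 ho
      have heq : i = l := by by_contra h; simp [ek, h] at ho
      subst heq
      rw [hFin i i le_rfl hnx1, hFout i (i-1) (by omega)]
      have ha := hf.2.2.2.2.1 i h1 h2 hvl
      have hb := adm_le hf (i-1) (by omega)
      omega
    · intro i h1 h2 ho
      have heq : i = l := by by_contra h; simp [ek, h] at ho
      subst heq
      rw [hFin i i le_rfl hnx1, hFout i (i-1) (by omega), hFout i (i-2) (by omega)]
      have ha := adm_nonneg hf i (by omega)
      push_cast
      omega
  -- support of the l-th factor lives in [l, nxt l)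
  have hsupp : ∀ l i, i ∈ supp n (factorF n v f l) → l ≤ i ∧ i < nxt n v l := by
    intro l i hi
    obtain ⟨hin, hlt⟩ := hi
    by_contra h
    rw [hFout l i h] at hlt
    omega
  -- ordering of intervals
  have hord : ∀ l l', v l' = 1 → l < l' → nxt n v l ≤ l' := by
    intro l l' h1 h2; exact nxt_le_of_one v h2 h1
  have part2 : ∀ l l', v l = 1 → v l' = 1 → l ≠ l' →
      Disjoint (supp n (factorF n v f l)) (supp n (factorF n v f l')) := by
    intro l l' hl hl' hne
    rw [Set.disjoint_left]
    intro i hi hi'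
    obtain ⟨ha1, ha2⟩ := hsupp l i hi
    obtain ⟨hb1, hb2⟩ := hsupp l' i hi'
    rcases Nat.lt_or_ge l l' with h | h
    · have := hord l l' hl' h; omega
    · have := hord l' l hl (by omega); omega
  -- Part 3
  have part3 : ∀ i ≤ n, f i =
      (((Finset.range (n + 1)).filter (fun l => v l = 1)).fold min (i : ℤ)
        (fun l => factorF n v f l i)) := by
    intro i hin
    apply le_antisymm
    · rw [Finset.le_fold_min]
      refine ⟨adm_le hf i hin, fun l _ => ?_⟩
      rw [hF]; split
      · exact le_rfl
      · exact adm_le hf i hin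
    · rw [Finset.fold_min_le]
      by_cases h : ∃ l, l ≤ i ∧ v l = 1
      · right
        obtain ⟨l0, hl0i, hl0⟩ := h
        set L := Nat.findGreatest (fun l => v l = 1) i with hL
        have hspec : v L = 1 :=
          Nat.findGreatest_spec (P := fun l => v l = 1) hl0i hl0
        have hLi : L ≤ i := Nat.findGreatest_le i
        have hgr : ∀ j, L < j → j ≤ i → v j ≠ 1 := by
          intro j hj1 hj2
          exact Nat.findGreatest_is_greatest (P := fun l => v l = 1) hj1 hj2
        have hiN : i < nxt n v L := by
          by_contra hc
          obtain ⟨c1, c2, c3⟩ := nxt_mem (n := n) v (le_trans hLi hin)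
          rcases c2 with c2 | c2
          · exact hgr (nxt n v L) c1 (by omega) c2
          · omega
        refine ⟨L, Finset.mem_filter.mpr ⟨Finset.mem_range.mpr (by omega), hspec⟩, ?_⟩
        rw [hFin L i hLi hiN]
      · left
        push_neg at h
        have := adm_id_of_nodesc hf i hin (fun j h1 h2 => by
          have := hv.1 j
          have := h j h2
          omega)
        omega
  refine ⟨part1, part2, part3, ?_⟩
  -- Part 4: uniqueness
  intro g hadm hdisj hmin l hvl i hin
  have hl1 := hdpos l hvl
  have hln := hdlt l hvl
  -- key: outside [l', nxt l'), g l' agrees with identity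
  have hgid : ∀ l', v l' = 1 → ∀ i, i ≤ n → (i < l' ∨ nxt n v l' ≤ i) → g l' i = (i : ℤ) := by
    intro l' hvl' i hin hcase
    have hg' := hadm l' hvl'
    have hl'1 := hdpos l' hvl'
    have hl'n := hdlt l' hvl'
    rcases hcase with h | h
    · exact ek_id_left hg' i hin h
    · obtain ⟨c1, c2, c3⟩ := nxt_mem (n := n) v (le_of_lt hl'n)
      set m := nxt n v l' with hm
      have hmn : m ≤ n := by omega
      have hvm : v m = 1 := by
        rcases c2 with c2 | c2
        · exact c2
        · omega
      have hmem : m ∈ supp n (g m) := by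
        refine ⟨hmn, ?_⟩
        exact ek_desc (hadm m hvm) (hdpos m hvm) hmn
      have hnot : m ∉ supp n (g l') := by
        intro hc
        exact (Set.disjoint_left.mp (hdisj l' m hvl' hvm (by omega)) hc) hmem
      have hgm : g l' m = (m : ℤ) := by
        have h1 : ¬ (g l' m < (m : ℤ)) := fun hc => hnot ⟨hmn, hc⟩
        have h2 := adm_le hg' m hmn
        omega
      exact ek_prop hg' hl'1 m (by omega) hmn hgm i h hin
  by_cases hi : l ≤ i ∧ i < nxt n v l
  · rw [hFin l i hi.1 hi.2]
    -- g l' i = i for every other descent l'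
    have hother : ∀ l', v l' = 1 → l' ≠ l → g l' i = (i : ℤ) := by
      intro l' hvl' hne
      apply hgid l' hvl' i hin
      rcases Nat.lt_or_ge l' l with h | h
      · right
        have := hord l' l hvl (by omega)
        omega
      · left
        have := hord l l' hvl' (by omega)
        omega
    have hfold := hmin i hin
    have h1 : g l i ≤ (((Finset.range (n + 1)).filter (fun l => v l = 1)).fold min (i : ℤ)
        (fun l' => g l' i)) := by
      rw [Finset.le_fold_min]
      refine ⟨adm_le (hadm l hvl) i hin, fun l' hl' => ?_⟩
      obtain ⟨_, hvl'⟩ := Finset.mem_filter.mp hl'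
      by_cases h : l' = l
      · subst h; exact le_rfl
      · rw [hother l' hvl' h]
        exact adm_le (hadm l hvl) i hin
    have h2 : (((Finset.range (n + 1)).filter (fun l => v l = 1)).fold min (i : ℤ)
        (fun l' => g l' i)) ≤ g l i := by
      rw [Finset.fold_min_le]
      exact Or.inr ⟨l, Finset.mem_filter.mpr ⟨Finset.mem_range.mpr (by omega), hvl⟩, le_rfl⟩
    omega
  · rw [hFout l i hi]
    apply hgid l hvl i hin
    omega
end

section
/- There is no sequence of non-negative integers (a_v) indexed by multidegrees v of degree-6 cd-monomials realizable as dimensions of graded pieces of a standard multigraded algebra generated in degrees e_1,...,e_6, with values a_{c^6}=1, a_{dc^4}=a_{c^2dc^2}=a_{c^4d}=2, a_{c^2d^2}=a_{dc^2d}=a_{d^2c^2}=1, a_{d^3}=2. Concretely: there is no commutative ℤ^6-graded k-algebra A with A_0 = k, generated by the pieces A_{e_i}, such that dim A_{e_1}=dim A_{e_3}=dim A_{e_5}=2, dim A_{e_1+e_3}=dim A_{e_1+e_5}=dim A_{e_3+e_5}=1, and dim A_{e_1+e_3+e_5}=2. -/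
/-!
In a standard multigraded algebra `A_{u+v} = A_u A_v`, so
`A_{e₁+e₃+e₅} = A_{e₁} A_{e₃} A_{e₅}`. The line `A_{e₁+e₃} = A_{e₁} A_{e₃}` is spanned by a single
product `x y`, hence `A_{e₁+e₃+e₅} = x y A_{e₅} ⊆ x A_{e₃+e₅}`, which has dimension at most one
because `A_{e₃+e₅}` does. This contradicts `dim A_{e₁+e₃+e₅} = 2`.
-/

namespace SetLike.GradedMonoid

section Semiring

variable {M K A : Type*} [AddMonoid M] [CommSemiring K] [Semiring A] [Algebra K A]
  (𝒜 : M → Submodule K A) [SetLike.GradedMonoid 𝒜]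

theorem mul_le (u v : M) : 𝒜 u * 𝒜 v ≤ 𝒜 (u + v) :=
  Submodule.mul_le.mpr fun _ hx _ hy => SetLike.mul_mem_graded hx hy

theorem pow_le (v : M) (n : ℕ) : 𝒜 v ^ n ≤ 𝒜 (n • v) := by
  induction n with
  | zero => simpa using Submodule.one_le.mpr (SetLike.one_mem_graded 𝒜)
  | succ n ih =>
    rw [pow_succ, succ_nsmul]
    exact (mul_le_mul' ih le_rfl).trans (mul_le 𝒜 _ _)

end Semiring

theorem prod_le {M K A κ : Type*} [AddCommMonoid M] [CommSemiring K] [CommSemiring A]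
    [Algebra K A] (𝒜 : M → Submodule K A) [SetLike.GradedMonoid 𝒜]
    (s : Finset κ) (f : κ → M) : ∏ j ∈ s, 𝒜 (f j) ≤ 𝒜 (∑ j ∈ s, f j) := by
  classical
  induction s using Finset.induction_on with
  | empty => simpa using Submodule.one_le.mpr (SetLike.one_mem_graded 𝒜)
  | insert j s hj ih =>
    rw [Finset.prod_insert hj, Finset.sum_insert hj]
    exact (mul_le_mul' le_rfl ih).trans (mul_le 𝒜 _ _)

end SetLike.GradedMonoid

section StandardGraded

variable {ι K A : Type*} [Fintype ι] [DecidableEq ι] [CommSemiring K] [CommSemiring A]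
  [Algebra K A] (𝒜 : (ι → ℕ) → Submodule K A)

def monomialSpan (v : ι → ℕ) : Submodule K A :=
  ∏ i, 𝒜 (Pi.single i 1) ^ v i

theorem monomialSpan_add (u v : ι → ℕ) :
    monomialSpan 𝒜 (u + v) = monomialSpan 𝒜 u * monomialSpan 𝒜 v := by
  simp only [monomialSpan, Pi.add_apply, pow_add, Finset.prod_mul_distrib]

theorem monomialSpan_zero : monomialSpan 𝒜 0 = 1 := by
  simp [monomialSpan]

theorem monomialSpan_single (i : ι) : monomialSpan 𝒜 (Pi.single i 1) = 𝒜 (Pi.single i 1) := by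
  rw [monomialSpan, Finset.prod_eq_single i (fun j _ hj => by simp [hj]) (by simp)]
  simp

theorem monomialSpan_le [GradedAlgebra 𝒜] (v : ι → ℕ) : monomialSpan 𝒜 v ≤ 𝒜 v := by
  conv_rhs => rw [pi_eq_sum_univ' v]
  exact (Finset.prod_le_prod' fun i _ => SetLike.GradedMonoid.pow_le 𝒜 _ _).trans
    (SetLike.GradedMonoid.prod_le 𝒜 _ _)

/-- `⨆ v, monomialSpan 𝒜 v` is closed under multiplication, hence contains the subalgebra
generated by the degree-`eᵢ` pieces. -/
theorem adjoin_le_iSup_monomialSpan :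
    Subalgebra.toSubmodule (Algebra.adjoin K (⋃ i, (𝒜 (Pi.single i 1) : Set A))) ≤
      ⨆ v, monomialSpan 𝒜 v := by
  set P := ⨆ v, monomialSpan 𝒜 v
  have hmul : P * P ≤ P := by
    simp only [P, Submodule.iSup_mul, Submodule.mul_iSup, ← monomialSpan_add]
    exact iSup_le fun _ => iSup_le fun _ => le_iSup _ _
  have hone : (1 : A) ∈ P :=
    Submodule.one_le.mp ((monomialSpan_zero 𝒜).symm.le.trans (le_iSup _ 0))
  refine Algebra.adjoin_le (S := P.toSubalgebra hone
    fun x y hx hy => hmul (Submodule.mul_mem_mul hx hy)) ?_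
  refine Set.iUnion_subset fun i x hx => ?_
  exact le_iSup (monomialSpan 𝒜) _ ((monomialSpan_single 𝒜 i).ge hx)

variable {𝒜} [GradedAlgebra 𝒜]

/-- Write `x ∈ 𝒜 v` as a sum of elements of the `monomialSpan 𝒜 w ≤ 𝒜 w`; projecting to degree
`v` keeps only the summand in `monomialSpan 𝒜 v`. -/
theorem le_monomialSpan
    (hgen : Algebra.adjoin K (⋃ i, (𝒜 (Pi.single i 1) : Set A)) = ⊤)
    (v : ι → ℕ) : 𝒜 v ≤ monomialSpan 𝒜 v := by
  intro x hx
  have hx' : x ∈ ⨆ w, monomialSpan 𝒜 w :=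
    adjoin_le_iSup_monomialSpan 𝒜 (by rw [hgen]; trivial)
  rw [← DirectSum.decompose_of_mem_same 𝒜 hx]
  refine Submodule.iSup_induction _
    (motive := fun y => (DirectSum.decompose 𝒜 y v : A) ∈ monomialSpan 𝒜 v) hx' ?_ ?_ ?_
  · intro w y hy
    by_cases hwv : w = v
    · subst hwv
      rwa [DirectSum.decompose_of_mem_same 𝒜 (monomialSpan_le 𝒜 w hy)]
    · rw [DirectSum.decompose_of_mem_ne 𝒜 (monomialSpan_le 𝒜 w hy) hwv]
      exact zero_mem _
  · simp
  · intro y z hy hz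
    simpa using add_mem hy hz

theorem graded_eq_monomialSpan
    (hgen : Algebra.adjoin K (⋃ i, (𝒜 (Pi.single i 1) : Set A)) = ⊤)
    (v : ι → ℕ) : 𝒜 v = monomialSpan 𝒜 v :=
  (le_monomialSpan hgen v).antisymm (monomialSpan_le 𝒜 v)

theorem graded_add_eq_mul
    (hgen : Algebra.adjoin K (⋃ i, (𝒜 (Pi.single i 1) : Set A)) = ⊤)
    (u v : ι → ℕ) : 𝒜 (u + v) = 𝒜 u * 𝒜 v := by
  simp only [graded_eq_monomialSpan hgen, monomialSpan_add]

end StandardGraded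

namespace Submodule

variable {K V : Type*} [Field K] [AddCommGroup V] [Module K V]

theorem le_span_singleton_of_rank_le_one {s : Submodule K V} (hs : Module.rank K s ≤ 1)
    {v : V} (hv : v ∈ s) (hv0 : v ≠ 0) : s ≤ K ∙ v := by
  obtain ⟨u, hu⟩ := (rank_submodule_le_one_iff' s).mp hs
  obtain ⟨r, rfl⟩ := mem_span_singleton.mp (hu hv)
  have hr : r ≠ 0 := by rintro rfl; exact hv0 (zero_smul K u)
  rwa [span_singleton_smul_eq hr.isUnit]

variable {A : Type*} [Ring A] [Algebra K A]

/-- Unless `X * Y = 0`, it is the line through some product `x * y`, so `X * Y * Z` lies in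
`x • (Y * Z)`. -/
theorem rank_mul_mul_le_one {X Y Z : Submodule K A} (hXY : Module.rank K ↥(X * Y) ≤ 1)
    (hYZ : Module.rank K ↥(Y * Z) ≤ 1) : Module.rank K ↥(X * Y * Z) ≤ 1 := by
  refine (rank_submodule_le_one_iff' _).mpr ?_
  by_cases hprod : ∃ x ∈ X, ∃ y ∈ Y, x * y ≠ 0
  · obtain ⟨x, hx, y, hy, hxy⟩ := hprod
    obtain ⟨w, hw⟩ := (rank_submodule_le_one_iff' _).mp hYZ
    have hXY_le := le_span_singleton_of_rank_le_one hXY (mul_mem_mul hx hy) hxy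
    refine ⟨x * w, mul_le.mpr fun a ha z hz => ?_⟩
    obtain ⟨c, rfl⟩ := mem_span_singleton.mp (hXY_le ha)
    obtain ⟨d, hd⟩ := mem_span_singleton.mp (hw (mul_mem_mul hy hz))
    refine mem_span_singleton.mpr ⟨c * d, ?_⟩
    rw [smul_mul_assoc, mul_assoc, ← hd, mul_smul_comm, smul_smul]
  · push Not at hprod
    have hXY_bot : X * Y = ⊥ :=
      eq_bot_iff.mpr (mul_le.mpr fun x hx y hy => by simp [hprod x hx y hy])
    exact ⟨0, by simp [hXY_bot]⟩

end Submodule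

theorem stmt15_general (k A : Type) [Field k] [CommRing A] [Algebra k A]
    (𝒜 : (Fin 6 → ℕ) → Submodule k A) [GradedAlgebra 𝒜]
    (hgen : Algebra.adjoin k (⋃ i : Fin 6, (𝒜 (Pi.single i 1) : Set A)) = ⊤)
    (h13 : Module.finrank k (𝒜 (Pi.single 0 1 + Pi.single 2 1)) = 1)
    (h35 : Module.finrank k (𝒜 (Pi.single 2 1 + Pi.single 4 1)) = 1)
    (h135 : Module.finrank k
      (𝒜 (Pi.single 0 1 + Pi.single 2 1 + Pi.single 4 1)) = 2) :
    False := by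
  have hmul := graded_add_eq_mul hgen
  have hrank : Module.rank k (𝒜 (Pi.single 0 1 + Pi.single 2 1 + Pi.single 4 1)) ≤ 1 := by
    rw [hmul, hmul]
    refine Submodule.rank_mul_mul_le_one ?_ ?_
    · rw [← hmul, Module.rank_eq_one_iff_finrank_eq_one.mpr h13]
    · rw [← hmul, Module.rank_eq_one_iff_finrank_eq_one.mpr h35]
  have := Module.finrank_le_of_rank_le (n := 1) (by exact_mod_cast hrank)
  omega

/-- There is no standard multigraded algebra whose graded dimensions match the
cd-polynomial c⁶ + 2(dc⁴+c²dc²+c⁴d) + (c²d²+dc²d+d²c²) + 2d³: no commutative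
ℤ⁶-graded k-algebra A with A₀ = k, generated in the degrees eᵢ, with
dim A_{e₁} = dim A_{e₃} = dim A_{e₅} = 2, the three pairwise sums of
dimension 1, and dim A_{e₁+e₃+e₅} = 2. (Here e₁,e₃,e₅ are indexed 0,2,4.) -/
theorem stmt15 (k A : Type) [Field k] [CommRing A] [Algebra k A]
    (𝒜 : (Fin 6 → ℕ) → Submodule k A) [GradedAlgebra 𝒜]
    (hgen : Algebra.adjoin k (⋃ i : Fin 6, (𝒜 (Pi.single i 1) : Set A)) = ⊤)
    (h0 : Module.finrank k (𝒜 0) = 1)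
    (h1 : Module.finrank k (𝒜 (Pi.single 0 1)) = 2)
    (h3 : Module.finrank k (𝒜 (Pi.single 2 1)) = 2)
    (h5 : Module.finrank k (𝒜 (Pi.single 4 1)) = 2)
    (h13 : Module.finrank k (𝒜 (Pi.single 0 1 + Pi.single 2 1)) = 1)
    (h15 : Module.finrank k (𝒜 (Pi.single 0 1 + Pi.single 4 1)) = 1)
    (h35 : Module.finrank k (𝒜 (Pi.single 2 1 + Pi.single 4 1)) = 1)
    (h135 : Module.finrank k
      (𝒜 (Pi.single 0 1 + Pi.single 2 1 + Pi.single 4 1)) = 2) :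
    False :=
  stmt15_general k A 𝒜 hgen h13 h35 h135
end
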